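/- On a Kenmotsu pseudo-metric manifold, (∇_Z R)(X,Y)ξ = ε{g(X,Z)Y − g(Y,Z)X} − R(X,Y)Z for all vector fields X, Y, Z. -/

import Mathlib

open scoped BigOperators

/-- An almost contact structure with a pseudo-Riemannian metric, *without* the
compatibility condition `g(φX,φY) = g(X,Y) - ε η(X) η(Y)`.  Here `C` plays the
role of the ring of smooth functions and `V` the `C`-module of vector fields. -/
structure PreACPM (C V : Type) [CommRing C] [Algebra ℝ C] [AddCommGroup V] [Module C V] where
  g : V → V → C
  g_symm : ∀ X Y, g X Y = g Y X
  g_add_left : ∀ X Y Z, g (X + Y) Z = g X Z + g Y Z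
  g_smul_left : ∀ (f : C) (X Y : V), g (f • X) Y = f * g X Y
  g_nondeg : ∀ X, (∀ Y, g X Y = 0) → X = 0
  φ : V → V
  φ_add : ∀ X Y, φ (X + Y) = φ X + φ Y
  φ_smul : ∀ (f : C) (X : V), φ (f • X) = f • φ X
  ξ : V
  η : V → C
  η_add : ∀ X Y, η (X + Y) = η X + η Y
  η_smul : ∀ (f : C) (X : V), η (f • X) = f * η X
  ε : ℝ
  hε : ε = 1 ∨ ε = -1
  φ_sq : ∀ X, φ (φ X) = -X + η X • ξ
  η_ξ : η ξ = 1
  φ_ξ : φ ξ = 0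
  η_φ : ∀ X, η (φ X) = 0

/-- An almost contact pseudo-metric manifold:
`g(φX,φY) = g(X,Y) - ε η(X) η(Y)`. -/
structure ACPM (C V : Type) [CommRing C] [Algebra ℝ C] [AddCommGroup V] [Module C V]
    extends PreACPM C V where
  compat : ∀ X Y, g (φ X) (φ Y) = g X Y - ε • (η X * η Y)

/-- A Kenmotsu pseudo-metric manifold: an almost contact pseudo-metric manifold
whose Levi-Civita connection `∇` satisfies `(∇_X φ)Y = -η(Y) φX - ε g(X,φY) ξ`.
`act X f` is the derivative of the function `f` along the vector field `X`,
`bracket` is the Lie bracket and `nabla` the Levi-Civita connection. -/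
structure Kenmotsu (C V : Type) [CommRing C] [Algebra ℝ C] [AddCommGroup V] [Module C V]
    extends ACPM C V where
  act : V → C → C
  act_add₁ : ∀ X Y f, act (X + Y) f = act X f + act Y f
  act_smul₁ : ∀ (f : C) (X : V) (h : C), act (f • X) h = f * act X h
  act_add : ∀ X f h, act X (f + h) = act X f + act X h
  act_mul : ∀ X f h, act X (f * h) = act X f * h + f * act X h
  act_const : ∀ (X : V) (s : ℝ), act X (algebraMap ℝ C s) = 0
  bracket : V → V → V
  bracket_antisymm : ∀ X Y, bracket X Y = -bracket Y X
  bracket_act : ∀ X Y f, act (bracket X Y) f = act X (act Y f) - act Y (act X f)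
  nabla : V → V → V
  nabla_add₁ : ∀ X Y Z, nabla (X + Y) Z = nabla X Z + nabla Y Z
  nabla_smul₁ : ∀ (f : C) (X Y : V), nabla (f • X) Y = f • nabla X Y
  nabla_add₂ : ∀ X Y Z, nabla X (Y + Z) = nabla X Y + nabla X Z
  nabla_leibniz : ∀ (X : V) (f : C) (Y : V), nabla X (f • Y) = act X f • Y + f • nabla X Y
  torsion_free : ∀ X Y, nabla X Y - nabla Y X = bracket X Y
  metric_compat : ∀ X Y Z, act X (g Y Z) = g (nabla X Y) Z + g Y (nabla X Z)
  kenmotsu : ∀ X Y, nabla X (φ Y) - φ (nabla X Y) = -(η Y • φ X) - (ε • g X (φ Y)) • ξ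

namespace Kenmotsu

variable {C V : Type} [CommRing C] [Algebra ℝ C] [AddCommGroup V] [Module C V]

/-- The Riemann curvature tensor `R(X,Y)Z = ∇_X ∇_Y Z - ∇_Y ∇_X Z - ∇_[X,Y] Z`. -/
def R (K : Kenmotsu C V) (X Y Z : V) : V :=
  K.nabla X (K.nabla Y Z) - K.nabla Y (K.nabla X Z) - K.nabla (K.bracket X Y) Z

/-- The covariant derivative `(∇_W R)(X,Y)Z` of the curvature tensor. -/
def covR (K : Kenmotsu C V) (W X Y Z : V) : V :=
  K.nabla W (K.R X Y Z) - K.R (K.nabla W X) Y Z - K.R X (K.nabla W Y) Z - K.R X Y (K.nabla W Z)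

/-- `(∇_X η)(Y)`. -/
def covEta (K : Kenmotsu C V) (X Y : V) : C :=
  K.act X (K.η Y) - K.η (K.nabla X Y)

/-- The Lie derivative `(£_W g)(X,Y)`. -/
def lieg (K : Kenmotsu C V) (W X Y : V) : C :=
  K.act W (K.g X Y) - K.g (K.bracket W X) Y - K.g X (K.bracket W Y)

/-- The Lie derivative `(£_W φ)(X)`. -/
def liephi (K : Kenmotsu C V) (W X : V) : V :=
  K.bracket W (K.φ X) - K.φ (K.bracket W X)

/-- The Lie derivative `(£_W η)(X)`. -/
def lieeta (K : Kenmotsu C V) (W X : V) : C :=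
  K.act W (K.η X) - K.η (K.bracket W X)

end Kenmotsu

/-- A `(2n+1)`-dimensional Kenmotsu pseudo-metric manifold together with a
pseudo-orthonormal frame, the Ricci tensor `Ric` (the trace of the curvature
with respect to the frame) and the Ricci operator `Q`. -/
structure KenmotsuRic (C V : Type) [CommRing C] [Algebra ℝ C] [AddCommGroup V] [Module C V]
    extends Kenmotsu C V where
  n : ℕ
  frame : Fin (2 * n + 1) → V
  sign : Fin (2 * n + 1) → ℝ
  sign_pm : ∀ i, sign i = 1 ∨ sign i = -1
  frame_orth : ∀ i j, g (frame i) (frame j) = if i = j then sign i • (1 : C) else 0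
  frame_span : ∀ X : V, X = ∑ i, (sign i • g X (frame i)) • frame i
  Ric : V → V → C
  hRic : ∀ X Y, Ric X Y = ∑ i, sign i • g (toKenmotsu.R (frame i) X Y) (frame i)
  Q : V → V
  hQ : ∀ X Y, g (Q X) Y = Ric X Y

namespace KenmotsuRic

variable {C V : Type} [CommRing C] [Algebra ℝ C] [AddCommGroup V] [Module C V]
  [Module ℝ V] [IsScalarTower ℝ C V]

/-- The scalar curvature `r`. -/
def r (K : KenmotsuRic C V) : C := ∑ i, K.sign i • K.Ric (K.frame i) (K.frame i)

/-- The Weyl conformal curvature tensor `C(X,Y)Z`. -/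
noncomputable def Weyl (K : KenmotsuRic C V) (X Y Z : V) : V :=
  K.toKenmotsu.R X Y Z
    - (2 * (K.n : ℝ) - 1)⁻¹ •
        (K.Ric Y Z • X + K.g Y Z • K.Q X - K.Ric X Z • Y - K.g X Z • K.Q Y)
    + (2 * (K.n : ℝ) * (2 * (K.n : ℝ) - 1))⁻¹ •
        ((K.r * K.g Y Z) • X - (K.r * K.g X Z) • Y)

/-- `(∇_X Q)(Y)`. -/
def covQ (K : KenmotsuRic C V) (X Y : V) : V :=
  K.nabla X (K.Q Y) - K.Q (K.nabla X Y)

/-- `M` is η-Einstein: `Ric = a g + b η⊗η` for functions `a`, `b`. -/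
def etaEinstein (K : KenmotsuRic C V) : Prop :=
  ∃ a b : C, ∀ X Y, K.Ric X Y = a * K.g X Y + b * (K.η X * K.η Y)

end KenmotsuRic

/-!
The Kenmotsu condition at `Y = ξ` gives `φ(∇_X ξ) = φX`, and `g(ξ,ξ) = ε` being constant gives
`η(∇_X ξ) = 0`; applying `φ` once more yields `∇_X ξ = X - η(X)ξ`. Hence
`(∇_Z η)X = ε g(X,Z) - η(Z)η(X)` is symmetric, which makes `R(X,Y)ξ = η(X)Y - η(Y)X`.
Differentiating this identity along `Z`, with `∇_Z ξ = Z - η(Z)ξ` in the last slot of `∇_Z R`,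
leaves only `(∇_Z η)` terms and `-R(X,Y)Z`.
-/

namespace PreACPM

variable {C V : Type} [CommRing C] [Algebra ℝ C] [AddCommGroup V] [Module C V]
  (M : PreACPM C V)

lemma g_add_right (X Y Z : V) : M.g X (Y + Z) = M.g X Y + M.g X Z := by
  rw [M.g_symm, M.g_add_left, M.g_symm Y, M.g_symm Z]

lemma g_smul_right (f : C) (X Y : V) : M.g X (f • Y) = f * M.g X Y := by
  rw [M.g_symm, M.g_smul_left, M.g_symm]

lemma g_sub_right (X Y Z : V) : M.g X (Y - Z) = M.g X Y - M.g X Z :=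
  (AddMonoidHom.mk' (M.g X) (M.g_add_right X)).map_sub Y Z

lemma g_zero_right (X : V) : M.g X 0 = 0 :=
  (AddMonoidHom.mk' (M.g X) (M.g_add_right X)).map_zero

lemma η_sub (X Y : V) : M.η (X - Y) = M.η X - M.η Y :=
  (AddMonoidHom.mk' M.η M.η_add).map_sub X Y

lemma ε_smul_ε_smul {W : Type} [AddCommGroup W] [Module ℝ W] (x : W) : M.ε • M.ε • x = x := by
  rcases M.hε with h | h <;> simp [h]

end PreACPM

namespace ACPM

variable {C V : Type} [CommRing C] [Algebra ℝ C] [AddCommGroup V] [Module C V]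
  (M : ACPM C V)

lemma g_ξ_right (X : V) : M.g X M.ξ = M.ε • M.η X := by
  have h := M.compat X M.ξ
  rw [M.φ_ξ, M.g_zero_right, M.η_ξ, mul_one] at h
  exact sub_eq_zero.mp h.symm

lemma η_eq_ε_smul_g (X : V) : M.η X = M.ε • M.g X M.ξ := by
  rw [M.g_ξ_right, M.ε_smul_ε_smul]

lemma g_ξ_ξ : M.g M.ξ M.ξ = algebraMap ℝ C M.ε := by
  rw [M.g_ξ_right, M.η_ξ, Algebra.algebraMap_eq_smul_one]

end ACPM

namespace Kenmotsu

variable {C V : Type} [CommRing C] [Algebra ℝ C] [AddCommGroup V] [Module C V]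
  (K : Kenmotsu C V)

lemma nabla_zero₂ (X : V) : K.nabla X 0 = 0 :=
  (AddMonoidHom.mk' (K.nabla X) (K.nabla_add₂ X)).map_zero

lemma nabla_sub₂ (X Y Z : V) : K.nabla X (Y - Z) = K.nabla X Y - K.nabla X Z :=
  (AddMonoidHom.mk' (K.nabla X) (K.nabla_add₂ X)).map_sub Y Z

lemma act_algebraMap_mul (X : V) (s : ℝ) (f : C) :
    K.act X (algebraMap ℝ C s * f) = algebraMap ℝ C s * K.act X f := by
  rw [K.act_mul, K.act_const, zero_mul, zero_add]

lemma g_nabla_ξ_ξ (X : V) : K.g (K.nabla X K.ξ) K.ξ = 0 := by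
  have h := K.metric_compat X K.ξ K.ξ
  rw [K.g_ξ_ξ, K.act_const, K.g_symm K.ξ, ← two_smul ℝ] at h
  exact (smul_eq_zero.mp h.symm).resolve_left two_ne_zero

lemma η_nabla_ξ (X : V) : K.η (K.nabla X K.ξ) = 0 := by
  rw [K.η_eq_ε_smul_g, K.g_nabla_ξ_ξ, smul_zero]

lemma φ_nabla_ξ (X : V) : K.φ (K.nabla X K.ξ) = K.φ X := by
  have h := K.kenmotsu X K.ξ
  rw [K.φ_ξ, K.nabla_zero₂, K.η_ξ, one_smul, K.g_zero_right, smul_zero, zero_smul,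
    zero_sub, sub_zero] at h
  exact neg_injective h

lemma nabla_ξ (X : V) : K.nabla X K.ξ = X - K.η X • K.ξ := by
  have h : K.φ (K.φ (K.nabla X K.ξ)) = K.φ (K.φ X) := by rw [K.φ_nabla_ξ]
  rw [K.φ_sq, K.φ_sq, K.η_nabla_ξ, zero_smul, add_zero] at h
  linear_combination (norm := module) -h

lemma covEta_eq (Z X : V) : K.covEta Z X = K.ε • K.g X Z - K.η Z * K.η X := by
  have h := K.metric_compat Z X K.ξ
  rw [K.nabla_ξ, K.g_sub_right, K.g_smul_right] at h
  simp only [covEta, K.η_eq_ε_smul_g, Algebra.smul_def, K.act_algebraMap_mul, h]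
  ring

lemma covEta_symm (X Y : V) : K.covEta X Y = K.covEta Y X := by
  rw [K.covEta_eq, K.covEta_eq, K.g_symm, mul_comm]

lemma R_ξ (X Y : V) : K.R X Y K.ξ = K.η X • Y - K.η Y • X := by
  have h := K.covEta_symm X Y
  simp only [covEta] at h
  rw [R, K.nabla_ξ, K.nabla_ξ, K.nabla_ξ, ← K.torsion_free, K.nabla_sub₂, K.nabla_sub₂,
    K.nabla_leibniz, K.nabla_leibniz, K.nabla_ξ, K.nabla_ξ, K.η_sub]
  linear_combination (norm := module) -(h • K.ξ)

lemma R_sub₃ (X Y Z W : V) : K.R X Y (Z - W) = K.R X Y Z - K.R X Y W := by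
  simp only [R, K.nabla_sub₂]
  abel

lemma R_smul₃ (X Y : V) (f : C) (Z : V) : K.R X Y (f • Z) = f • K.R X Y Z := by
  simp only [R, K.nabla_leibniz, K.nabla_add₂, K.bracket_act]
  module

end Kenmotsu

/-- On a Kenmotsu pseudo-metric manifold,
`(∇_Z R)(X,Y)ξ = ε{g(X,Z)Y - g(Y,Z)X} - R(X,Y)Z`. -/
theorem covR_xi {C V : Type} [CommRing C] [Algebra ℝ C] [AddCommGroup V] [Module C V]
    (K : Kenmotsu C V) :
    ∀ X Y Z, K.covR Z X Y K.ξ = (K.ε • K.g X Z) • Y - (K.ε • K.g Y Z) • X - K.R X Y Z := by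
  intro X Y Z
  have hX := K.covEta_eq Z X
  have hY := K.covEta_eq Z Y
  simp only [Kenmotsu.covEta] at hX hY
  rw [Kenmotsu.covR, K.nabla_ξ, K.R_sub₃, K.R_smul₃, K.R_ξ, K.R_ξ, K.R_ξ, K.nabla_sub₂,
    K.nabla_leibniz, K.nabla_leibniz]
  linear_combination (norm := module) hX • Y - hY • X
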